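/- arXiv:1806.11197 — 2 statements merged into one kernel-verified Lean document; each statement's English description precedes it below -/
import Mathlib

section
/- Let V be a graded commutative associative algebra over a field k of characteristic zero, and let Δ : V → V be a linear operator of degree -1 that is a differential operator of order ≤ 2 (i.e., [[[Δ, L_a], L_b], L_c] = 0 for all a,b,c ∈ V, where L_a denotes left multiplication by a) with Δ(1) = 0 and Δ² = 0. Define the antibracket {a,b} := (-1)^{|a|}(Δ(ab) - (Δa)b - (-1)^{|a|} a(Δb)). Then {-,-} satisfies the graded Jacobi identity for a Lie bracket of degree -1, i.e., {a,{b,c}} = {{a,b},c} + (-1)^{(|a|+1)(|b|+1)} {b,{a,c}} for all homogeneous a,b,c ∈ V. -/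
/-!
Write `X_a = [Δ, L_a]`. Unwinding the definitions, `X_a x = (-1)^|a| {a,x} + (Δa) x`. The
order-two condition says that `[X_a, L_x]` graded-commutes with every `L_y`, so by graded
commutativity it is right multiplication by its value at `1`, which is `(-1)^|a| {a,x}` because
`Δ 1 = 0`; this is the graded Leibniz rule for `{a,-}`, an operator of degree `|a| - 1`.
Independently, `Δ² = 0` makes `Δ` a derivation of the bracket: `Δ{a,x} = {Δa,x} - (-1)^|a| {a,Δx}`.
Applying `{a,-}` to `Δ(bc) = (-1)^|b| {b,c} + (Δb) c + (-1)^|b| b Δc` and expanding both sides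
with these two rules leaves exactly the Jacobi identity.
-/

/-- The graded commutator `[X, L_a]` of an operator `X` of degree `ε` with the operator of
left multiplication by a homogeneous element `a` of degree `i`, as an operator `V → V`. -/
noncomputable def gcomm (k : Type*) [Field k] {V : Type*} [Ring V] [Algebra k V]
    (ε : ℤ) (X : V → V) (i : ℤ) (a : V) : V → V :=
  fun x => X (a * x) - ((-1 : k) ^ (ε * i)) • (a * X x)

/-- The BV antibracket `{a,b} := (-1)^{|a|} (Δ(ab) - (Δa)b - (-1)^{|a|} a (Δb))`
for `a` homogeneous of degree `i`. -/
noncomputable def antibracket (k : Type*) [Field k] {V : Type*} [Ring V] [Algebra k V]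
    (Δ : V → V) (i : ℤ) (a b : V) : V :=
  ((-1 : k) ^ i) • (Δ (a * b) - Δ a * b - ((-1 : k) ^ i) • (a * Δ b))

section Signs
variable {k : Type*} [DivisionRing k]

lemma neg_one_zpow_eq_of_even_sub {m n : ℤ} (h : Even (m - n)) :
    (-1 : k) ^ m = (-1 : k) ^ n := by
  rw [← Int.cast_negOnePow, ← Int.cast_negOnePow, (Int.negOnePow_eq_iff m n).2 h]

lemma neg_one_zpow_mul_self (n : ℤ) : (-1 : k) ^ n * (-1 : k) ^ n = 1 := by
  rw [← zpow_add₀ (by norm_num), neg_one_zpow_eq_of_even_sub (n := 0) (by simp), zpow_zero]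

lemma neg_one_zpow_add (m n : ℤ) : (-1 : k) ^ (m + n) = (-1 : k) ^ m * (-1 : k) ^ n :=
  zpow_add₀ (by norm_num) m n

lemma neg_one_zpow_sub (m n : ℤ) : (-1 : k) ^ (m - n) = (-1 : k) ^ m * (-1 : k) ^ n := by
  rw [neg_one_zpow_eq_of_even_sub (n := m + n) ⟨-n, by ring⟩, neg_one_zpow_add]

end Signs

section Antibracket
variable {k V : Type*} [Field k] [Ring V] [Algebra k V] (Δ : V →ₗ[k] V)

lemma antibracket_sub_right (i : ℤ) (a x y : V) :
    antibracket k Δ i a (x - y) = antibracket k Δ i a x - antibracket k Δ i a y := by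
  simp only [antibracket, map_sub, mul_sub]
  module

lemma antibracket_smul_right (i : ℤ) (a : V) (s : k) (x : V) :
    antibracket k Δ i a (s • x) = s • antibracket k Δ i a x := by
  simp only [antibracket, map_smul, mul_smul_comm]
  module

lemma map_mul_eq_antibracket_add (i : ℤ) (a b : V) :
    Δ (a * b) = (-1 : k) ^ i • antibracket k Δ i a b + Δ a * b + (-1 : k) ^ i • (a * Δ b) := by
  simp only [antibracket, smul_sub, smul_smul, neg_one_zpow_mul_self, one_smul]
  abel

lemma gcomm_neg_one_apply (i : ℤ) (a x : V) :
    gcomm k (-1) Δ i a x = (-1 : k) ^ i • antibracket k Δ i a x + Δ a * x := by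
  rw [gcomm, map_mul_eq_antibracket_add Δ i,
    neg_one_zpow_eq_of_even_sub (m := -1 * i) (n := i) ⟨-i, by ring⟩]
  abel

lemma map_antibracket (hsq : ∀ x, Δ (Δ x) = 0) (i : ℤ) (a x : V) :
    Δ (antibracket k Δ i a x) =
      antibracket k Δ (i - 1) (Δ a) x - (-1 : k) ^ i • antibracket k Δ i a (Δ x) := by
  simp only [antibracket, map_sub, map_smul, hsq, zero_mul, mul_zero, smul_zero, sub_zero,
    neg_one_zpow_sub, zpow_one]
  match_scalars <;> grind [neg_one_zpow_mul_self]

end Antibracket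

section Graded
variable {k V : Type*} [Field k] [Ring V] [Algebra k V] {𝒜 : ℤ → Submodule k V}

lemma apply_eq_apply_one_mul_of_gcomm_eq_zero
    (hcomm : ∀ (i j : ℤ), ∀ a ∈ 𝒜 i, ∀ b ∈ 𝒜 j, a * b = ((-1 : k) ^ (i * j)) • (b * a))
    {ε : ℤ} {Y : V → V} (hY : Y 1 ∈ 𝒜 ε) {l : ℤ} {c : V} (hc : c ∈ 𝒜 l)
    (hYc : gcomm k ε Y l c 1 = 0) : Y c = Y 1 * c := by
  rwa [gcomm, mul_one, sub_eq_zero, hcomm l ε c hc _ hY, smul_smul, mul_comm l,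
    neg_one_zpow_mul_self, one_smul] at hYc

variable (Δ : V →ₗ[k] V)

lemma gcomm_gcomm_apply_one
    (hcomm : ∀ (i j : ℤ), ∀ a ∈ 𝒜 i, ∀ b ∈ 𝒜 j, a * b = ((-1 : k) ^ (i * j)) • (b * a))
    (hdeg : ∀ (i : ℤ), ∀ a ∈ 𝒜 i, Δ a ∈ 𝒜 (i - 1)) (hone : Δ 1 = 0)
    {i j : ℤ} {a b : V} (ha : a ∈ 𝒜 i) (hb : b ∈ 𝒜 j) :
    gcomm k (i - 1) (gcomm k (-1) Δ i a) j b 1 = (-1 : k) ^ i • antibracket k Δ i a b := by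
  have hΔa : gcomm k (-1) Δ i a 1 = Δ a := by simp [gcomm, hone]
  rw [gcomm, mul_one, hΔa, gcomm_neg_one_apply, hcomm j (i - 1) b hb _ (hdeg i a ha), smul_smul,
    mul_comm j, neg_one_zpow_mul_self, one_smul, add_sub_cancel_right]

variable [SetLike.GradedMul 𝒜]

lemma antibracket_mem (hdeg : ∀ (i : ℤ), ∀ a ∈ 𝒜 i, Δ a ∈ 𝒜 (i - 1))
    {i j : ℤ} {a b : V} (ha : a ∈ 𝒜 i) (hb : b ∈ 𝒜 j) :
    antibracket k Δ i a b ∈ 𝒜 (i + j - 1) := by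
  have h₁ : Δ (a * b) ∈ 𝒜 (i + j - 1) := hdeg _ _ (SetLike.mul_mem_graded ha hb)
  have h₂ : Δ a * b ∈ 𝒜 (i + j - 1) := by
    convert SetLike.mul_mem_graded (hdeg i a ha) hb using 2; ring
  have h₃ : a * Δ b ∈ 𝒜 (i + j - 1) := by
    convert SetLike.mul_mem_graded ha (hdeg j b hb) using 2; ring
  exact Submodule.smul_mem _ _ (sub_mem (sub_mem h₁ h₂) (Submodule.smul_mem _ _ h₃))

lemma antibracket_mul_right
    (hcomm : ∀ (i j : ℤ), ∀ a ∈ 𝒜 i, ∀ b ∈ 𝒜 j, a * b = ((-1 : k) ^ (i * j)) • (b * a))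
    (hdeg : ∀ (i : ℤ), ∀ a ∈ 𝒜 i, Δ a ∈ 𝒜 (i - 1)) (hone : Δ 1 = 0)
    (horder2 : ∀ (i j l : ℤ), ∀ a ∈ 𝒜 i, ∀ b ∈ 𝒜 j, ∀ c ∈ 𝒜 l, ∀ x : V,
      gcomm k (i + j - 1) (gcomm k (i - 1) (gcomm k (-1) (⇑Δ) i a) j b) l c x = 0)
    ⦃i m n : ℤ⦄ ⦃a x y : V⦄ (ha : a ∈ 𝒜 i) (hx : x ∈ 𝒜 m) (hy : y ∈ 𝒜 n) :
    antibracket k Δ i a (x * y) =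
      antibracket k Δ i a x * y + (-1 : k) ^ ((i - 1) * m) • (x * antibracket k Δ i a y) := by
  have h_at_one := gcomm_gcomm_apply_one Δ hcomm hdeg hone ha hx
  have h_right_mul := apply_eq_apply_one_mul_of_gcomm_eq_zero hcomm
    (h_at_one ▸ Submodule.smul_mem _ _ (antibracket_mem Δ hdeg ha hx)) hy
    (horder2 i m n a ha x hx y hy 1)
  rw [h_at_one, gcomm, gcomm_neg_one_apply, gcomm_neg_one_apply] at h_right_mul
  simp only [mul_add, mul_smul_comm, ← mul_assoc, hcomm m (i - 1) x hx _ (hdeg i a ha),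
    smul_mul_assoc, smul_add, mul_comm m (i - 1)] at h_right_mul
  linear_combination (norm := skip) (-1 : k) ^ i • h_right_mul
  match_scalars <;> grind [neg_one_zpow_mul_self]

end Graded

theorem antibracket_graded_jacobi_general
    {k V : Type*} [Field k] [Ring V] [Algebra k V]
    (𝒜 : ℤ → Submodule k V) [GradedAlgebra 𝒜]
    -- graded commutativity
    (hcomm : ∀ (i j : ℤ), ∀ a ∈ 𝒜 i, ∀ b ∈ 𝒜 j, a * b = ((-1 : k) ^ (i * j)) • (b * a))
    (Δ : V →ₗ[k] V)
    -- Δ has degree -1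
    (hdeg : ∀ (i : ℤ), ∀ a ∈ 𝒜 i, Δ a ∈ 𝒜 (i - 1))
    -- Δ kills the unit and squares to zero
    (hone : Δ 1 = 0)
    (hsq : ∀ x, Δ (Δ x) = 0)
    -- Δ is a differential operator of order ≤ 2: [[[Δ, L_a], L_b], L_c] = 0
    (horder2 : ∀ (i j l : ℤ), ∀ a ∈ 𝒜 i, ∀ b ∈ 𝒜 j, ∀ c ∈ 𝒜 l, ∀ x : V,
      gcomm k (i + j - 1) (gcomm k (i - 1) (gcomm k (-1) (⇑Δ) i a) j b) l c x = 0) :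
    -- graded Jacobi identity for the degree -1 bracket
    ∀ (i j l : ℤ), ∀ a ∈ 𝒜 i, ∀ b ∈ 𝒜 j, ∀ c ∈ 𝒜 l,
      antibracket k (⇑Δ) i a (antibracket k (⇑Δ) j b c) =
        antibracket k (⇑Δ) (i + j - 1) (antibracket k (⇑Δ) i a b) c +
          ((-1 : k) ^ ((i + 1) * (j + 1))) •
            antibracket k (⇑Δ) j b (antibracket k (⇑Δ) i a c) := by
  intro i j l a ha b hb c hc
  have leibniz := antibracket_mul_right Δ hcomm hdeg hone horder2
  have hbc : antibracket k Δ j b c =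
      (-1 : k) ^ j • (Δ (b * c) - Δ b * c - (-1 : k) ^ j • (b * Δ c)) := rfl
  have hΔbc : antibracket k Δ i a (Δ (b * c)) =
      (-1 : k) ^ i • (antibracket k Δ (i - 1) (Δ a) (b * c) - Δ (antibracket k Δ i a (b * c))) := by
    rw [map_antibracket Δ hsq]
    match_scalars <;> grind [neg_one_zpow_mul_self]
  rw [hbc, antibracket_smul_right, antibracket_sub_right, antibracket_sub_right,
    antibracket_smul_right, hΔbc, leibniz ha hb hc, map_add, map_smul,
    map_mul_eq_antibracket_add Δ (i + j - 1), map_mul_eq_antibracket_add Δ j,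
    map_antibracket Δ hsq, map_antibracket Δ hsq, leibniz (hdeg i a ha) hb hc,
    leibniz ha (hdeg j b hb) hc, leibniz ha hb (hdeg l c hc)]
  -- Expanding the exponents turns every sign into a product of `(-1) ^ i`, `(-1) ^ j`,
  -- `(-1) ^ (i * j)` and `-1`, whose squares are `1`.
  simp only [add_mul, mul_add, sub_mul, mul_sub, one_mul, mul_one, neg_one_zpow_add,
    neg_one_zpow_sub, zpow_one, smul_sub, smul_add, smul_mul_assoc, mul_smul_comm, smul_smul]
  match_scalars <;> grind [neg_one_zpow_mul_self]

theorem antibracket_graded_jacobi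
    {k V : Type*} [Field k] [CharZero k] [Ring V] [Algebra k V]
    (𝒜 : ℤ → Submodule k V) [GradedAlgebra 𝒜]
    -- graded commutativity
    (hcomm : ∀ (i j : ℤ), ∀ a ∈ 𝒜 i, ∀ b ∈ 𝒜 j, a * b = ((-1 : k) ^ (i * j)) • (b * a))
    (Δ : V →ₗ[k] V)
    -- Δ has degree -1
    (hdeg : ∀ (i : ℤ), ∀ a ∈ 𝒜 i, Δ a ∈ 𝒜 (i - 1))
    -- Δ kills the unit and squares to zero
    (hone : Δ 1 = 0)
    (hsq : ∀ x, Δ (Δ x) = 0)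
    -- Δ is a differential operator of order ≤ 2: [[[Δ, L_a], L_b], L_c] = 0
    (horder2 : ∀ (i j l : ℤ), ∀ a ∈ 𝒜 i, ∀ b ∈ 𝒜 j, ∀ c ∈ 𝒜 l, ∀ x : V,
      gcomm k (i + j - 1) (gcomm k (i - 1) (gcomm k (-1) (⇑Δ) i a) j b) l c x = 0) :
    -- graded Jacobi identity for the degree -1 bracket
    ∀ (i j l : ℤ), ∀ a ∈ 𝒜 i, ∀ b ∈ 𝒜 j, ∀ c ∈ 𝒜 l,
      antibracket k (⇑Δ) i a (antibracket k (⇑Δ) j b c) =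
        antibracket k (⇑Δ) (i + j - 1) (antibracket k (⇑Δ) i a b) c +
          ((-1 : k) ^ ((i + 1) * (j + 1))) •
            antibracket k (⇑Δ) j b (antibracket k (⇑Δ) i a c) :=
  antibracket_graded_jacobi_general 𝒜 hcomm Δ hdeg hone hsq horder2
end

section
/- Let 𝔤 be an involutive Lie bialgebra over a field of characteristic zero, with bracket [−,−], cobracket δ : 𝔤 → Λ²𝔤, and involutivity condition [−,−] ∘ δ = 0. Let Δ be the Chevalley-Eilenberg differential on S(𝔤[-1]) induced by the bracket, and let d be the extension of δ as a degree-one derivation of S(𝔤[-1]). Then dΔ + Δd = 0. -/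
/-!
On a monomial `ι y * ξ` the anticommutator `T = dΔ + Δd` satisfies `T (ι y ξ) = ι y T ξ + K_y ξ`
with `K_x = [Δ, δ x ·] + [d, L_x]`, so `T = 0` follows by induction from `T 1 = 0` once `K = 0`.
In turn `K_x (ι y ξ) = -ι y K_x ξ + (δ⁅x, y⁆ - L_x δ y + L_y δ x) ξ`, where the last term is killed
by the cocycle condition, and `K_x 1 = Δ (δ x)` vanishes by involutivity. The computation of
`K_x (ι y ξ)` uses only that `δ x`, being of even degree, commutes with `ι y`.
-/

open ExteriorAlgebra

theorem ExteriorAlgebra.commute_ι_of_mem_range_mul_range {R M : Type*} [CommRing R]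
    [AddCommGroup M] [Module R M] {w : ExteriorAlgebra R M}
    (hw : w ∈ LinearMap.range (ι R : M →ₗ[R] ExteriorAlgebra R M) *
      LinearMap.range (ι R : M →ₗ[R] ExteriorAlgebra R M)) (y : M) :
    Commute w (ι R y) := by
  have anticomm : ∀ a, ι R a * ι R y = -(ι R y * ι R a) := fun a =>
    eq_neg_of_add_eq_zero_left (ι_add_mul_swap a y)
  refine Submodule.mul_induction_on hw ?_ fun _ _ => Commute.add_left
  rintro _ ⟨a, rfl⟩ _ ⟨b, rfl⟩
  rw [Commute, SemiconjBy, mul_assoc, anticomm b, mul_neg, ← mul_assoc, anticomm a, neg_mul,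
    neg_neg, mul_assoc]

section BV

variable {k G : Type*} [CommRing k] [LieRing G] [LieAlgebra k G]
  (L : G → (ExteriorAlgebra k G →ₗ[k] ExteriorAlgebra k G))
  (Δ d : ExteriorAlgebra k G →ₗ[k] ExteriorAlgebra k G) (δ : G →ₗ[k] ExteriorAlgebra k G)

def bvDefect (x : G) : Module.End k (ExteriorAlgebra k G) :=
  ⁅Δ, LinearMap.mulLeft k (δ x)⁆ + ⁅d, L x⁆

theorem bvDefect_apply (x : G) (ξ : ExteriorAlgebra k G) :
    bvDefect L Δ d δ x ξ = Δ (δ x * ξ) - δ x * Δ ξ + (d (L x ξ) - L x (d ξ)) := by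
  simp [bvDefect, Ring.lie_def]

theorem d_Δ_add_Δ_d_ι_mul
    (hΔrec : ∀ x ξ, Δ (ι k x * ξ) = - (ι k x) * Δ ξ + L x ξ)
    (hdrec : ∀ x ξ, d (ι k x * ξ) = δ x * ξ - ι k x * d ξ) (y : G) (ξ : ExteriorAlgebra k G) :
    d (Δ (ι k y * ξ)) + Δ (d (ι k y * ξ)) =
      ι k y * (d (Δ ξ) + Δ (d ξ)) + bvDefect L Δ d δ y ξ := by
  rw [bvDefect_apply, hΔrec, hdrec, map_add, map_sub, hΔrec, neg_mul, map_neg, hdrec]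
  noncomm_ring

theorem bvDefect_ι_mul
    (hΔrec : ∀ x ξ, Δ (ι k x * ξ) = - (ι k x) * Δ ξ + L x ξ)
    (hLder : ∀ x (u v : ExteriorAlgebra k G), L x (u * v) = L x u * v + u * L x v)
    (hLι : ∀ x y, L x (ι k y) = ι k ⁅x, y⁆)
    (hdrec : ∀ x ξ, d (ι k x * ξ) = δ x * ξ - ι k x * d ξ)
    {x y : G} (hxy : Commute (δ x) (ι k y)) (ξ : ExteriorAlgebra k G) :
    bvDefect L Δ d δ x (ι k y * ξ) =
      -(ι k y * bvDefect L Δ d δ x ξ) + (δ ⁅x, y⁆ - (L x (δ y) - L y (δ x))) * ξ := by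
  simp only [bvDefect_apply]
  rw [← mul_assoc, hxy.eq, mul_assoc, hΔrec, hΔrec, hLder, hLder, hLι, map_add, hdrec, hdrec,
    hdrec, map_sub, hLder, hLder, hLι]
  simp only [neg_mul, mul_neg, mul_add, ← mul_assoc, hxy.eq]
  noncomm_ring

theorem bvDefect_eq_zero
    (hL1 : ∀ x, L x 1 = 0)
    (hLder : ∀ x (u v : ExteriorAlgebra k G), L x (u * v) = L x u * v + u * L x v)
    (hLι : ∀ x y, L x (ι k y) = ι k ⁅x, y⁆)
    (hΔ1 : Δ 1 = 0)
    (hΔrec : ∀ x ξ, Δ (ι k x * ξ) = - (ι k x) * Δ ξ + L x ξ)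
    (hδ : ∀ x y, Commute (δ x) (ι k y))
    (hcocycle : ∀ x y, δ ⁅x, y⁆ = L x (δ y) - L y (δ x))
    (hd1 : d 1 = 0)
    (hdrec : ∀ x ξ, d (ι k x * ξ) = δ x * ξ - ι k x * d ξ)
    (hinv : ∀ x, Δ (δ x) = 0) (x : G) : bvDefect L Δ d δ x = 0 := by
  refine LinearMap.ext fun ξ => ?_
  induction ξ using CliffordAlgebra.left_induction with
  | algebraMap r =>
    simp [Algebra.algebraMap_eq_smul_one, bvDefect_apply, hΔ1, hL1, hd1, hinv]
  | add u v hu hv => rw [map_add, hu, hv, map_add]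
  | ι_mul ξ y ih =>
    rw [bvDefect_ι_mul L Δ d δ hΔrec hLder hLι hdrec (hδ x y), ih, hcocycle, sub_self]
    simp

end BV

theorem involutive_lie_bialgebra_bv_anticommute_general
    {k G : Type*} [Field k]
    [LieRing G] [LieAlgebra k G]
    -- the adjoint-action derivations L_x of Λ𝔤
    (L : G → (ExteriorAlgebra k G →ₗ[k] ExteriorAlgebra k G))
    (hL1 : ∀ x, L x 1 = 0)
    (hLder : ∀ x (u v : ExteriorAlgebra k G), L x (u * v) = L x u * v + u * L x v)
    (hLι : ∀ x y, L x (ExteriorAlgebra.ι k y) = ExteriorAlgebra.ι k ⁅x, y⁆)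
    -- the CE operator Δ induced by the Lie bracket
    (Δ : ExteriorAlgebra k G →ₗ[k] ExteriorAlgebra k G)
    (hΔ1 : Δ 1 = 0)
    (hΔrec : ∀ x (ξ : ExteriorAlgebra k G),
      Δ (ExteriorAlgebra.ι k x * ξ) = - (ExteriorAlgebra.ι k x) * Δ ξ + L x ξ)
    -- the cobracket δ : 𝔤 → Λ²𝔤
    (δ : G →ₗ[k] ExteriorAlgebra k G)
    (hδdeg : ∀ x, δ x ∈
      ((LinearMap.range (ExteriorAlgebra.ι k : G →ₗ[k] ExteriorAlgebra k G)) *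
        (LinearMap.range (ExteriorAlgebra.ι k : G →ₗ[k] ExteriorAlgebra k G)) :
          Submodule k (ExteriorAlgebra k G)))
    -- the 1-cocycle condition on δ
    (hcocycle : ∀ x y, δ ⁅x, y⁆ = L x (δ y) - L y (δ x))
    -- d : the degree-one derivation of Λ𝔤 extending δ
    (d : ExteriorAlgebra k G →ₗ[k] ExteriorAlgebra k G)
    (hd1 : d 1 = 0)
    (hdrec : ∀ x (ξ : ExteriorAlgebra k G),
      d (ExteriorAlgebra.ι k x * ξ) = δ x * ξ - ExteriorAlgebra.ι k x * d ξ)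
    -- involutivity: [-,-] ∘ δ = 0
    (hinv : ∀ x, Δ (δ x) = 0) :
    ∀ ξ : ExteriorAlgebra k G, d (Δ ξ) + Δ (d ξ) = 0 := by
  have hK : ∀ x, bvDefect L Δ d δ x = 0 :=
    bvDefect_eq_zero L Δ d δ hL1 hLder hLι hΔ1 hΔrec
      (fun x => commute_ι_of_mem_range_mul_range (hδdeg x)) hcocycle hd1 hdrec hinv
  intro ξ
  induction ξ using CliffordAlgebra.left_induction with
  | algebraMap r => simp [Algebra.algebraMap_eq_smul_one, hΔ1, hd1]
  | add u v hu hv => rw [map_add, map_add, map_add, map_add, add_add_add_comm, hu, hv, add_zero]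
  | ι_mul ξ y ih =>
    rw [d_Δ_add_Δ_d_ι_mul L Δ d δ hΔrec hdrec, ih, hK, mul_zero, LinearMap.zero_apply, add_zero]

theorem involutive_lie_bialgebra_bv_anticommute
    {k G : Type*} [Field k] [CharZero k]
    [LieRing G] [LieAlgebra k G]
    -- the adjoint-action derivations L_x of Λ𝔤
    (L : G → (ExteriorAlgebra k G →ₗ[k] ExteriorAlgebra k G))
    (hL1 : ∀ x, L x 1 = 0)
    (hLder : ∀ x (u v : ExteriorAlgebra k G), L x (u * v) = L x u * v + u * L x v)
    (hLι : ∀ x y, L x (ExteriorAlgebra.ι k y) = ExteriorAlgebra.ι k ⁅x, y⁆)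
    -- the CE operator Δ induced by the Lie bracket
    (Δ : ExteriorAlgebra k G →ₗ[k] ExteriorAlgebra k G)
    (hΔ1 : Δ 1 = 0)
    (hΔι : ∀ x, Δ (ExteriorAlgebra.ι k x) = 0)
    (hΔrec : ∀ x (ξ : ExteriorAlgebra k G),
      Δ (ExteriorAlgebra.ι k x * ξ) = - (ExteriorAlgebra.ι k x) * Δ ξ + L x ξ)
    -- the cobracket δ : 𝔤 → Λ²𝔤
    (δ : G →ₗ[k] ExteriorAlgebra k G)
    (hδdeg : ∀ x, δ x ∈
      ((LinearMap.range (ExteriorAlgebra.ι k : G →ₗ[k] ExteriorAlgebra k G)) *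
        (LinearMap.range (ExteriorAlgebra.ι k : G →ₗ[k] ExteriorAlgebra k G)) :
          Submodule k (ExteriorAlgebra k G)))
    -- the 1-cocycle condition on δ
    (hcocycle : ∀ x y, δ ⁅x, y⁆ = L x (δ y) - L y (δ x))
    -- d : the degree-one derivation of Λ𝔤 extending δ
    (d : ExteriorAlgebra k G →ₗ[k] ExteriorAlgebra k G)
    (hd1 : d 1 = 0)
    (hdι : ∀ x, d (ExteriorAlgebra.ι k x) = δ x)
    (hdrec : ∀ x (ξ : ExteriorAlgebra k G),
      d (ExteriorAlgebra.ι k x * ξ) = δ x * ξ - ExteriorAlgebra.ι k x * d ξ)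
    -- co-Jacobi: d ∘ δ = 0
    (hcojac : ∀ x, d (δ x) = 0)
    -- involutivity: [-,-] ∘ δ = 0
    (hinv : ∀ x, Δ (δ x) = 0) :
    ∀ ξ : ExteriorAlgebra k G, d (Δ ξ) + Δ (d ξ) = 0 :=
  involutive_lie_bialgebra_bv_anticommute_general L hL1 hLder hLι Δ hΔ1 hΔrec δ hδdeg hcocycle d hd1
    hdrec hinv
end
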